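/- arXiv:1305.6873 — 2 statements merged into one kernel-verified Lean document; each statement's English description precedes it below -/
import Mathlib

section
/- Let X, X₁, X₂ be as in the context and assume additionally that tr X = 0. Writing F̃_j(X) for the coefficient of z^j in det(I + z·X) (so F̃_0(X) = 1 and F̃_1(X) = tr X = 0), one has, for every k with 1 ≤ k ≤ m: trΛ^k(X₂) = Σ_{j=0}^{k} (−1)^{k−j}·trS^{k−j}(X₁)·F̃_j(X). (Intermediate identity established by induction in the proof of Lemma 'block 2'.) -/
open Polynomial

/-- `trΛ^k(M)`: the coefficient of `z^k` in `det(I + z·M)`. -/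
noncomputable def trLambda {N : ℕ} (M : Matrix (Fin N) (Fin N) ℂ) (k : ℕ) : ℂ :=
  ((1 + (Polynomial.X : ℂ[X]) • M.map Polynomial.C).det).coeff k

/-- `trS^k(M)`: the coefficient of `t^k` in the multiplicative inverse of `det(I − t·M)`
in `ℂ[[t]]`. -/
noncomputable def trS {N : ℕ} (M : Matrix (Fin N) (Fin N) ℂ) (k : ℕ) : ℂ :=
  PowerSeries.coeff k
    ((((1 - (Polynomial.X : ℂ[X]) • M.map Polynomial.C).det : ℂ[X]) : PowerSeries ℂ)⁻¹)

/-!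
Let `Y` be `X` with the entries `v` of its last row deleted. Then `Y` is block upper triangular,
so `det (I + z Y) = det (I + z X₁) * det (I + z X₂)`, and `det (I + z X) ≡ det (I + z Y)` modulo
`z ^ (m + 1)`: with the weight `w i = max i (n - 1)`, every nonzero off-diagonal entry `X i j` has
`w i - w j ≥ -1`, whereas the entries `v` have `w i - w j = m`. The increments `w (σ j) - w j` of
a permutation sum to zero, so every term of the Leibniz expansion that uses an entry of `v` moves
at least `m + 1` indices and is divisible by `z ^ (m + 1)`. Multiplying by the inverse of
`det (I + z X₁)` in `ℂ⟦z⟧`, whose coefficients are `(-1) ^ i * trS^i (X₁)`, gives the identity.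
-/

open Matrix Finset Equiv.Perm

theorem Equiv.Perm.le_card_support_of_weight {ι : Type*} [Fintype ι] [DecidableEq ι]
    (σ : Equiv.Perm ι) (w : ι → ℤ) (m : ℤ) (hstep : ∀ j, σ j ≠ j → -1 ≤ w (σ j) - w j)
    {j₀ : ι} (hj₀ : σ j₀ ≠ j₀) (hjump : m ≤ w (σ j₀) - w j₀) : m + 1 ≤ #σ.support := by
  have hmem : j₀ ∈ σ.support := mem_support.2 hj₀
  have hsum : ∑ j ∈ σ.support, (w (σ j) - w j) = 0 := by
    rw [sum_sub_distrib, σ.sum_comp _ _ fun a ha => mem_support.2 ha, sub_self]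
  have hrest : #(σ.support.erase j₀) • (-1 : ℤ) ≤ ∑ j ∈ σ.support.erase j₀, (w (σ j) - w j) :=
    card_nsmul_le_sum _ _ _ fun j hj => hstep j (mem_support.1 (mem_of_mem_erase hj))
  rw [← add_sum_erase _ _ hmem] at hsum
  rw [card_erase_of_mem hmem, nsmul_eq_mul, Nat.cast_sub (card_pos.2 ⟨j₀, hmem⟩)] at hrest
  push_cast at hrest
  linarith

theorem PowerSeries.rescale_C {R : Type*} [CommSemiring R] (a c : R) : rescale a (C c) = C c := by
  ext n
  rcases eq_or_ne n 0 with rfl | hn <;> simp [coeff_rescale, coeff_C, *]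

theorem PowerSeries.rescale_inv {K : Type*} [Field K] (a : K) (f : PowerSeries K) :
    rescale a f⁻¹ = (rescale a f)⁻¹ := by
  have hconst : constantCoeff (rescale a f) = constantCoeff f := by
    rw [← coeff_zero_eq_constantCoeff_apply, coeff_rescale, pow_zero, one_mul,
      coeff_zero_eq_constantCoeff_apply]
  by_cases hf : constantCoeff f = 0
  · rw [inv_eq_zero.2 hf, inv_eq_zero.2 (hconst.trans hf), map_zero]
  · rw [eq_inv_iff_mul_eq_one (hconst ▸ hf), ← map_mul, PowerSeries.inv_mul_cancel _ hf, map_one]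

theorem Polynomial.coeff_eq_sum_coeff_inv_mul_coeff_mul {K : Type*} [Field K] {P : K[X]}
    (hP : P.coeff 0 ≠ 0) (Q : K[X]) (l : ℕ) :
    Q.coeff l =
      ∑ j ∈ range (l + 1), PowerSeries.coeff (l - j) (P : PowerSeries K)⁻¹ * (P * Q).coeff j := by
  have hP' : PowerSeries.constantCoeff (P : PowerSeries K) ≠ 0 := by
    rwa [← PowerSeries.coeff_zero_eq_constantCoeff_apply, coeff_coe]
  calc Q.coeff l
        = PowerSeries.coeff l (((P * Q : K[X]) : PowerSeries K) * (P : PowerSeries K)⁻¹) := by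
        rw [coe_mul, mul_comm (P : PowerSeries K), mul_assoc, PowerSeries.mul_inv_cancel _ hP',
          mul_one, coeff_coe]
    _ = _ := by
        rw [PowerSeries.coeff_mul, Finset.Nat.sum_antidiagonal_eq_sum_range_succ
          (fun a b => PowerSeries.coeff a ((P * Q : K[X]) : PowerSeries K) *
            PowerSeries.coeff b (P : PowerSeries K)⁻¹)]
        simp only [coeff_coe, mul_comm]

section

variable {R : Type*} [CommRing R] {ι : Type*} [DecidableEq ι]

lemma one_add_X_smul_map_C_apply_of_ne (M : Matrix ι ι R) {i j : ι} (h : i ≠ j) :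
    (1 + (X : R[X]) • M.map C) i j = X * C (M i j) := by
  simp [one_apply_ne h]

variable [Fintype ι]

lemma X_pow_card_support_dvd_prod (M : Matrix ι ι R) (σ : Equiv.Perm ι) :
    (X : R[X]) ^ #σ.support ∣ ∏ j, (1 + (X : R[X]) • M.map C) (σ j) j := by
  rw [← prod_const]
  refine (prod_dvd_prod_of_dvd _ _ fun j hj => ?_).trans
    (prod_dvd_prod_of_subset _ _ _ (subset_univ _))
  rw [one_add_X_smul_map_C_apply_of_ne M (mem_support.1 hj)]
  exact dvd_mul_right _ _

lemma coeff_prod_one_add_X_smul_eq_zero_of_weight (M : Matrix ι ι R) (σ : Equiv.Perm ι)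
    (w : ι → ℤ) {m : ℕ} (hM : ∀ i j, i ≠ j → M i j ≠ 0 → -1 ≤ w i - w j) {j₀ : ι}
    (hj₀ : σ j₀ ≠ j₀) (hjump : m ≤ w (σ j₀) - w j₀) {l : ℕ} (hl : l ≤ m) :
    (∏ j, (1 + (X : R[X]) • M.map C) (σ j) j).coeff l = 0 := by
  by_cases hσ : ∀ j, σ j ≠ j → M (σ j) j ≠ 0
  · have hcard := σ.le_card_support_of_weight w m (fun j hj => hM _ _ hj (hσ j hj)) hj₀ hjump
    obtain ⟨q, hq⟩ := X_pow_card_support_dvd_prod M σ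
    rw [hq, coeff_X_pow_mul', if_neg (by omega)]
  · push Not at hσ
    obtain ⟨j, hj, hzero⟩ := hσ
    rw [prod_eq_zero (mem_univ j) (by simp [one_add_X_smul_map_C_apply_of_ne M hj, hzero]),
      coeff_zero]

theorem coeff_det_one_add_X_smul_eq_of_weight (M M' : Matrix ι ι R) (w : ι → ℤ) {m : ℕ}
    (hM : ∀ i j, i ≠ j → M i j ≠ 0 → -1 ≤ w i - w j)
    (hM' : ∀ i j, M' i j ≠ M i j → M' i j = 0 ∧ i ≠ j ∧ (m : ℤ) ≤ w i - w j)
    {l : ℕ} (hl : l ≤ m) :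
    (det (1 + (X : R[X]) • M'.map C)).coeff l = (det (1 + (X : R[X]) • M.map C)).coeff l := by
  simp only [det_apply, finsetSum_coeff, coeff_smul]
  refine sum_congr rfl fun σ _ => ?_
  by_cases hσ : ∀ j, M' (σ j) j = M (σ j) j
  · simp only [Matrix.add_apply, Matrix.smul_apply, Matrix.map_apply, hσ]
  · push Not at hσ
    obtain ⟨j₀, hj₀⟩ := hσ
    obtain ⟨hzero, hne, hjump⟩ := hM' _ _ hj₀
    rw [coeff_prod_one_add_X_smul_eq_zero_of_weight M σ w hM hne hjump hl,
      prod_eq_zero (mem_univ j₀) (by simp [one_add_X_smul_map_C_apply_of_ne M' hne, hzero]),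
      coeff_zero]

lemma coeff_zero_det_one_add_X_smul (M : Matrix ι ι R) :
    (det (1 + (X : R[X]) • M.map C)).coeff 0 = 1 := by
  have hone : (evalRingHom (0 : R)).mapMatrix (1 + (X : R[X]) • M.map C) = 1 := by
    ext i j
    rcases eq_or_ne i j with rfl | h <;> simp [one_apply_ne, *]
  rw [coeff_zero_eq_eval_zero, ← coe_evalRingHom, RingHom.map_det, hone, det_one]

lemma coe_det_one_sub_X_smul_eq_rescale (M : Matrix ι ι R) :
    ((det (1 - (X : R[X]) • M.map C) : R[X]) : PowerSeries R) =
      PowerSeries.rescale (-1) (det (1 + (X : R[X]) • M.map C) : R[X]) := by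
  rw [← coeToPowerSeries.ringHom_apply, ← coeToPowerSeries.ringHom_apply, ← RingHom.comp_apply,
    RingHom.map_det, RingHom.map_det]
  congr 1
  ext i j
  by_cases h : i = j <;>
    simp [h, one_apply_ne, PowerSeries.rescale_C, sub_eq_add_neg]

lemma det_one_add_X_smul_fromBlocks_zero₂₁ {l o : Type*} [Fintype l] [DecidableEq l]
    [Fintype o] [DecidableEq o] (A : Matrix l l R) (B : Matrix l o R) (D : Matrix o o R) :
    det (1 + (X : R[X]) • (fromBlocks A B 0 D).map C) =
      det (1 + (X : R[X]) • A.map C) * det (1 + (X : R[X]) • D.map C) := by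
  rw [fromBlocks_map, Matrix.map_zero _ (map_zero C), ← fromBlocks_one, fromBlocks_smul,
    smul_zero, fromBlocks_add, add_zero, det_fromBlocks_zero₂₁]

theorem det_one_add_X_smul_of_natAdd_castAdd_eq_zero {n m : ℕ}
    (M : Matrix (Fin (n + m)) (Fin (n + m)) R)
    (h : ∀ a j, M (Fin.natAdd n a) (Fin.castAdd m j) = 0) :
    det (1 + (X : R[X]) • M.map C) =
      det (1 + (X : R[X]) • (M.submatrix (Fin.castAdd m) (Fin.castAdd m)).map C) *
        det (1 + (X : R[X]) • (M.submatrix (Fin.natAdd n) (Fin.natAdd n)).map C) := by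
  have hblocks : M.submatrix finSumFinEquiv finSumFinEquiv =
      fromBlocks (M.submatrix (Fin.castAdd m) (Fin.castAdd m))
        (M.submatrix (Fin.castAdd m) (Fin.natAdd n)) 0
        (M.submatrix (Fin.natAdd n) (Fin.natAdd n)) := by
    ext (i | i) (j | j) <;> simp [h]
  have hreindex : (1 + (X : R[X]) • M.map C).submatrix finSumFinEquiv finSumFinEquiv =
      1 + (X : R[X]) • (M.submatrix finSumFinEquiv finSumFinEquiv).map C := by
    ext i j
    simp [Matrix.one_apply]
  rw [← det_submatrix_equiv_self finSumFinEquiv, hreindex, hblocks,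
    det_one_add_X_smul_fromBlocks_zero₂₁]

theorem coeff_det_one_add_X_smul_eq_coeff_det_mul_det {n m : ℕ} (hm : 1 ≤ m)
    (M : Matrix (Fin (n + m)) (Fin (n + m)) R)
    (h1 : ∀ i j : Fin (n + m), i.val < n → n + 1 ≤ j.val → M i j = 0)
    (h2 : ∀ i j : Fin (n + m), n ≤ i.val → i.val < n + m - 1 → j.val < n → M i j = 0)
    (h3 : ∀ i j : Fin (n + m), n ≤ i.val → n ≤ j.val → i.val + 2 ≤ j.val → M i j = 0)
    {l : ℕ} (hl : l ≤ m) :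
    (det (1 + (X : R[X]) • M.map C)).coeff l =
      (det (1 + (X : R[X]) • (M.submatrix (Fin.castAdd m) (Fin.castAdd m)).map C) *
        det (1 + (X : R[X]) • (M.submatrix (Fin.natAdd n) (Fin.natAdd n)).map C)).coeff l := by
  set Y : Matrix (Fin (n + m)) (Fin (n + m)) R :=
    Matrix.of fun i j => if i.val = n + m - 1 ∧ j.val < n then 0 else M i j with hYdef
  let w : Fin (n + m) → ℤ := fun i => max (i.val : ℤ) (n - 1)
  have hweight : ∀ i j, i ≠ j → M i j ≠ 0 → -1 ≤ w i - w j := by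
    intro i j _ hM
    have h1' : ¬(i.val < n ∧ n + 1 ≤ j.val) := fun h => hM (h1 i j h.1 h.2)
    have h3' : ¬(n ≤ i.val ∧ n ≤ j.val ∧ i.val + 2 ≤ j.val) :=
      fun h => hM (h3 i j h.1 h.2.1 h.2.2)
    simp only [w]
    omega
  have hY : ∀ i j, Y i j ≠ M i j → Y i j = 0 ∧ i ≠ j ∧ (m : ℤ) ≤ w i - w j := by
    intro i j hne
    simp only [hYdef, Matrix.of_apply] at hne ⊢
    split_ifs at hne ⊢ with h
    · exact ⟨rfl, fun hij => by subst hij; omega, by simp only [w]; omega⟩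
    · exact absurd rfl hne
  have hlower : ∀ a c, Y (Fin.natAdd n a) (Fin.castAdd m c) = 0 := by
    intro a c
    simp only [hYdef, Matrix.of_apply]
    split_ifs with h
    · rfl
    · simp only [Fin.val_natAdd, Fin.val_castAdd] at h
      exact h2 _ _ (Nat.le_add_right n a) (by simp only [Fin.val_natAdd]; omega) c.isLt
  have hupper : Y.submatrix (Fin.castAdd m) (Fin.castAdd m) =
      M.submatrix (Fin.castAdd m) (Fin.castAdd m) := by
    ext i j
    simp only [hYdef, submatrix_apply, Matrix.of_apply, Fin.val_castAdd]
    rw [if_neg (by omega)]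
  have hbottom : Y.submatrix (Fin.natAdd n) (Fin.natAdd n) =
      M.submatrix (Fin.natAdd n) (Fin.natAdd n) := by
    ext i j
    simp only [hYdef, submatrix_apply, Matrix.of_apply, Fin.val_natAdd]
    rw [if_neg (by omega)]
  rw [← coeff_det_one_add_X_smul_eq_of_weight M Y w hweight hY hl,
    det_one_add_X_smul_of_natAdd_castAdd_eq_zero Y hlower, hupper, hbottom]

end

lemma neg_one_pow_mul_trS {N : ℕ} (M : Matrix (Fin N) (Fin N) ℂ) (i : ℕ) :
    (-1) ^ i * trS M i =
      PowerSeries.coeff i ((det (1 + (X : ℂ[X]) • M.map C) : ℂ[X]) : PowerSeries ℂ)⁻¹ := by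
  rw [trS, coe_det_one_sub_X_smul_eq_rescale, ← PowerSeries.rescale_inv, PowerSeries.coeff_rescale,
    ← mul_assoc, ← mul_pow, neg_one_mul, neg_neg, one_pow, one_mul]

theorem block2_induction_step (n m : ℕ) (hm : 2 ≤ m)
    (Xm : Matrix (Fin (n + m)) (Fin (n + m)) ℂ)
    (h1 : ∀ i j : Fin (n + m), i.val < n → n + 1 ≤ j.val → Xm i j = 0)
    (h2 : ∀ i j : Fin (n + m), n ≤ i.val → i.val < n + m - 1 → j.val < n → Xm i j = 0)
    (h3 : ∀ i j : Fin (n + m), n ≤ i.val → n ≤ j.val → i.val + 2 ≤ j.val → Xm i j = 0)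
    (X₁ : Matrix (Fin n) (Fin n) ℂ)
    (hX₁ : ∀ i j : Fin n, X₁ i j = Xm (Fin.castLE (by omega) i) (Fin.castLE (by omega) j))
    (X₂ : Matrix (Fin m) (Fin m) ℂ)
    (hX₂ : ∀ a b : Fin m, X₂ a b = Xm (Fin.natAdd n a) (Fin.natAdd n b)) :
    ∀ k : ℕ, 1 ≤ k → k ≤ m →
      trLambda X₂ k =
        ∑ j ∈ Finset.range (k + 1), (-1 : ℂ) ^ (k - j) * trS X₁ (k - j) * trLambda Xm j := by
  intro k _ hk
  have hP : (det (1 + (X : ℂ[X]) • X₁.map C)).coeff 0 ≠ 0 := by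
    simp [coeff_zero_det_one_add_X_smul]
  obtain rfl : X₁ = Xm.submatrix (Fin.castAdd m) (Fin.castAdd m) := Matrix.ext hX₁
  obtain rfl : X₂ = Xm.submatrix (Fin.natAdd n) (Fin.natAdd n) := Matrix.ext hX₂
  rw [trLambda, coeff_eq_sum_coeff_inv_mul_coeff_mul hP]
  refine sum_congr rfl fun j hj => ?_
  rw [neg_one_pow_mul_trS, trLambda,
    coeff_det_one_add_X_smul_eq_coeff_det_mul_det (by omega) Xm h1 h2 h3 (by rw [mem_range] at hj; omega)]
end

section
/- Let n ≥ 1 and i ≥ 1 be integers, λ_1,…,λ_n ∈ ℂ and δ ∈ ℂ. Then h_i(λ_1+δ,…,λ_n+δ) = Σ_{j=0}^{i} C(n+i−1, j)·h_{i−j}(λ_1,…,λ_n)·δ^j, where C(a,b) denotes the binomial coefficient. (Lemma 'twist' of the paper.) -/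
/-- The `k`-th complete homogeneous symmetric polynomial
`h_k(x_1,…,x_N) = Σ_{i_1 ≤ ⋯ ≤ i_k} x_{i_1}⋯x_{i_k}` (`hsymm x 0 = 1`). -/
noncomputable def hsymm {N : ℕ} (x : Fin N → ℂ) (k : ℕ) : ℂ :=
  ∑ f ∈ Finset.univ.filter (fun f : Fin k → Fin N => ∀ a b : Fin k, a ≤ b → f a ≤ f b),
    ∏ a : Fin k, x (f a)

/-!
Deleting the last variable gives `h_{k+1}(x_1,…,x_{n+1}) = h_{k+1}(x_1,…,x_n) + x_{n+1} h_k(x_1,…,x_{n+1})`.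
Applied to both sides of the formula, it reduces the case `(n + 1, i + 1)` to the cases `(n, i + 1)`
and `(n + 1, i)`, and the binomial coefficients recombine by Pascal's rule. The induction on `n`
starts at `n = 0`, where `h_i` vanishes for `i ≥ 1` and so does `C(i - 1, i)`.
-/

open Finset

def monotoneMaps (k N : ℕ) : Finset (Fin k → Fin N) :=
  univ.filter fun f => ∀ a b : Fin k, a ≤ b → f a ≤ f b

lemma mem_monotoneMaps {k N : ℕ} {f : Fin k → Fin N} : f ∈ monotoneMaps k N ↔ Monotone f := by
  simp [monotoneMaps, Monotone]

lemma hsymm_eq_sum_monotoneMaps {N : ℕ} (x : Fin N → ℂ) (k : ℕ) :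
    hsymm x k = ∑ f ∈ monotoneMaps k N, ∏ a, x (f a) := rfl

lemma hsymm_zero {N : ℕ} (x : Fin N → ℂ) : hsymm x 0 = 1 := by
  simp [hsymm]

lemma hsymm_fin_zero_succ (x : Fin 0 → ℂ) (k : ℕ) : hsymm x (k + 1) = 0 := by
  simp [hsymm]

lemma sum_monotoneMaps_last_ne {n k : ℕ} (x : Fin (n + 1) → ℂ) :
    ∑ f ∈ (monotoneMaps (k + 1) (n + 1)).filter (fun f => f (Fin.last k) ≠ Fin.last n),
      ∏ a, x (f a) = hsymm (x ∘ Fin.castSucc) (k + 1) := by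
  have ne_last {f : Fin (k + 1) → Fin (n + 1)}
      (hf : f ∈ (monotoneMaps (k + 1) (n + 1)).filter (fun f => f (Fin.last k) ≠ Fin.last n))
      (a : Fin (k + 1)) : f a ≠ Fin.last n := by
    rw [mem_filter, mem_monotoneMaps] at hf
    exact Fin.lt_last_iff_ne_last.1 <|
      (hf.1 (Fin.le_last a)).trans_lt (Fin.lt_last_iff_ne_last.2 hf.2)
  rw [hsymm_eq_sum_monotoneMaps]
  refine sum_bij' (fun f hf a => (f a).castPred (ne_last hf a)) (fun g _ => Fin.castSucc ∘ g)
    ?_ ?_ (fun _ _ => rfl) (fun _ _ => rfl) ?_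
  · intro f hf
    rw [mem_monotoneMaps]
    exact fun a b hab =>
      Fin.castPred_le_castPred_iff.2 (mem_monotoneMaps.1 (mem_filter.1 hf).1 hab)
  · intro g hg
    rw [mem_filter, mem_monotoneMaps]
    exact ⟨Fin.strictMono_castSucc.monotone.comp (mem_monotoneMaps.1 hg),
      (Fin.castSucc_lt_last _).ne⟩
  · intro f hf
    simp only [Function.comp_apply, Fin.castSucc_castPred]

lemma sum_monotoneMaps_last_eq {n k : ℕ} (x : Fin (n + 1) → ℂ) :
    ∑ f ∈ (monotoneMaps (k + 1) (n + 1)).filter (fun f => f (Fin.last k) = Fin.last n),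
      ∏ a, x (f a) = x (Fin.last n) * hsymm x k := by
  rw [hsymm_eq_sum_monotoneMaps, mul_sum]
  refine sum_bij' (fun f _ => Fin.init f) (fun g _ => Fin.snoc g (Fin.last n)) ?_ ?_ ?_ ?_ ?_
  · intro f hf
    rw [mem_filter, mem_monotoneMaps] at hf
    exact mem_monotoneMaps.2 fun a b hab => hf.1 (Fin.castSucc_le_castSucc_iff.2 hab)
  · intro g hg
    rw [mem_filter, mem_monotoneMaps, Fin.snoc_last]
    refine ⟨fun a b hab => ?_, rfl⟩
    induction b using Fin.lastCases with
    | last => simp only [Fin.snoc_last, Fin.le_last]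
    | cast b =>
      induction a using Fin.lastCases with
      | last => exact absurd hab (Fin.castSucc_lt_last b).not_ge
      | cast a =>
        simpa only [Fin.snoc_castSucc] using
          mem_monotoneMaps.1 hg (Fin.castSucc_le_castSucc_iff.1 hab)
  · intro f hf
    rw [← (mem_filter.1 hf).2]
    exact Fin.snoc_init_self f
  · intro g _
    exact Fin.init_snoc _ _
  · intro f hf
    rw [Fin.prod_univ_castSucc, (mem_filter.1 hf).2, mul_comm]
    rfl

lemma hsymm_succ {n : ℕ} (x : Fin (n + 1) → ℂ) (k : ℕ) :
    hsymm x (k + 1) = hsymm (x ∘ Fin.castSucc) (k + 1) + x (Fin.last n) * hsymm x k := by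
  rw [hsymm_eq_sum_monotoneMaps,
    ← sum_filter_not_add_sum_filter _ (fun f => f (Fin.last k) = Fin.last n),
    sum_monotoneMaps_last_ne, sum_monotoneMaps_last_eq]

section twistSum

variable {R : Type*} [CommSemiring R]

def twistSum (m i : ℕ) (h : ℕ → R) (δ : R) : R :=
  ∑ j ∈ range (i + 1), (m.choose j : R) * h (i - j) * δ ^ j

lemma twistSum_zero (m : ℕ) (h : ℕ → R) (δ : R) : twistSum m 0 h δ = h 0 := by
  simp [twistSum]

lemma twistSum_succ_succ (m i : ℕ) (h : ℕ → R) (δ : R) :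
    twistSum (m + 1) (i + 1) h δ = twistSum m (i + 1) h δ + δ * twistSum m i h δ := by
  have pascal : ∀ j ∈ range (i + 1),
      ((m + 1).choose (j + 1) : R) * h (i + 1 - (j + 1)) * δ ^ (j + 1) =
        (m.choose (j + 1) : R) * h (i + 1 - (j + 1)) * δ ^ (j + 1) +
          δ * ((m.choose j : R) * h (i - j) * δ ^ j) := by
    intro j _
    rw [Nat.choose_succ_succ, Nat.cast_add, Nat.add_sub_add_right]
    ring
  rw [twistSum, twistSum, twistSum, sum_range_succ', sum_congr rfl pascal, sum_add_distrib,
    sum_range_succ' (fun j => (m.choose j : R) * h (i + 1 - j) * δ ^ j), mul_sum]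
  simp only [Nat.choose_zero_right]
  ring

lemma twistSum_of_succ_eq_add {g h : ℕ → R} {c : R} (h_zero : g 0 = h 0)
    (h_succ : ∀ k, h (k + 1) = g (k + 1) + c * h k) (m i : ℕ) (δ : R) :
    twistSum m (i + 1) h δ = twistSum m (i + 1) g δ + c * twistSum m i h δ := by
  have termwise : ∀ j ∈ range (i + 1), (m.choose j : R) * h (i + 1 - j) * δ ^ j =
      (m.choose j : R) * g (i + 1 - j) * δ ^ j + c * ((m.choose j : R) * h (i - j) * δ ^ j) := by
    intro j hj
    rw [Nat.sub_add_comm (Nat.lt_succ_iff.1 (mem_range.1 hj)), h_succ]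
    ring
  rw [twistSum, twistSum, twistSum, sum_range_succ, sum_range_succ _ (i + 1), Nat.sub_self,
    h_zero, sum_congr rfl termwise, sum_add_distrib, mul_sum]
  ring

end twistSum

lemma hsymm_add_const {n : ℕ} (lam : Fin n → ℂ) (δ : ℂ) (i : ℕ) :
    hsymm (fun k => lam k + δ) i = twistSum (n + i - 1) i (hsymm lam) δ := by
  induction n generalizing i with
  | zero =>
    cases i with
    | zero => simp [twistSum_zero, hsymm_zero]
    | succ i =>
      rw [zero_add, Nat.add_sub_cancel, hsymm_fin_zero_succ, twistSum, sum_range_succ,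
        Nat.choose_succ_self, Nat.cast_zero, zero_mul, zero_mul, add_zero]
      refine (sum_eq_zero fun j hj => ?_).symm
      rw [Nat.sub_add_comm (Nat.lt_succ_iff.1 (mem_range.1 hj)), hsymm_fin_zero_succ,
        mul_zero, zero_mul]
  | succ n ih =>
    induction i with
    | zero => simp [twistSum_zero, hsymm_zero]
    | succ i ih' =>
      have ih_init : hsymm ((fun k => lam k + δ) ∘ Fin.castSucc) (i + 1) =
          twistSum (n + (i + 1) - 1) (i + 1) (hsymm (lam ∘ Fin.castSucc)) δ :=
        ih (lam ∘ Fin.castSucc) (i + 1)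
      have h_recur := twistSum_of_succ_eq_add (by rw [hsymm_zero, hsymm_zero])
        (hsymm_succ lam) (n + i) i δ
      rw [hsymm_succ, ih_init, ih',
        show n + 1 + (i + 1) - 1 = n + i + 1 by omega, show n + (i + 1) - 1 = n + i by omega,
        show n + 1 + i - 1 = n + i by omega, twistSum_succ_succ, h_recur]
      ring

theorem lemma_twist_general (n i : ℕ) (lam : Fin n → ℂ) (δ : ℂ) :
    hsymm (fun k => lam k + δ) i =
      ∑ j ∈ Finset.range (i + 1),
        (Nat.choose (n + i - 1) j : ℂ) * hsymm lam (i - j) * δ ^ j :=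
  hsymm_add_const lam δ i

theorem lemma_twist (n i : ℕ) (hn : 1 ≤ n) (hi : 1 ≤ i) (lam : Fin n → ℂ) (δ : ℂ) :
    hsymm (fun k => lam k + δ) i =
      ∑ j ∈ Finset.range (i + 1),
        (Nat.choose (n + i - 1) j : ℂ) * hsymm lam (i - j) * δ ^ j :=
  lemma_twist_general n i lam δ
end
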